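/- Residual Noether symmetries in the presence of gravity (3D): suppose the 3D cell Lagrangian has the form L = L₀ + Π, where L₀ : (ℝ³)¹⁶ → ℝ satisfies L₀(Rx₁+c, …, Rx₁₆+c) = L₀(x₁, …, x₁₆) for every R ∈ SO(3) and c ∈ ℝ³, and Π(x₁,…,x₁₆) := −κ Σ_{p odd} g·x_p for a fixed constant κ ∈ ℝ and a fixed vector g ∈ ℝ³. If the discrete field φ satisfies the 3D discrete Euler–Lagrange node equations at every node with 0 < j < N, then for all 0 ≤ j ≤ N−2: (i) ⟨𝐉_l^{j+1} − 𝐉_l^j, c⟩ = 0 for every c ∈ ℝ³ with g·c = 0 (the components of the discrete linear momentum orthogonal to g are conserved), and (ii) g·(𝐉_r^{j+1} − 𝐉_r^j) = 0 (the discrete angular momentum about the axis g is conserved), where 𝐉_l^j := Σ_{cells □^j} Σ_{p even} D_pL(j¹φ(□^j)) and 𝐉_r^j := Σ_{cells □^j} Σ_{p even} x_p × D_pL(j¹φ(□^j)). -/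

import Mathlib

open scoped RealInnerProductSpace

noncomputable section

/-- The space `ℝ³` as a Euclidean space. -/
abbrev E3 : Type := EuclideanSpace ℝ (Fin 3)

/-- Partial gradient `D_pL ∈ ℝ³` of a cell Lagrangian `L` in its `p`-th slot. -/
noncomputable def pgrad3 {k : ℕ} (L : (Fin k → E3) → ℝ) (x : Fin k → E3) (p : Fin k) : E3 :=
  gradient (fun y => L (Function.update x p y)) (x p)

/-- Cross product on `ℝ³`. -/
def cross3 (u v : E3) : E3 :=
  WithLp.toLp 2 ![u 1 * v 2 - u 2 * v 1, u 2 * v 0 - u 0 * v 2, u 0 * v 1 - u 1 * v 0]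

/-- `a`-offsets of the 16 slots of a 3D cell (slots `0,…,15` correspond to the paper's
slots `1,…,16`; slot `2m` is the time-`j` value and slot `2m+1` the time-`j+1` value at
the `m`-th spatial node `(a,b,c), (a+1,b,c), (a,b+1,c), (a,b,c+1), (a+1,b+1,c),
(a,b+1,c+1), (a+1,b,c+1), (a+1,b+1,c+1)`). -/
def offA : Fin 16 → ℕ := ![0,0,1,1,0,0,0,0,1,1,0,0,1,1,1,1]
/-- `b`-offsets of the 16 slots of a 3D cell. -/
def offB : Fin 16 → ℕ := ![0,0,0,0,1,1,0,0,1,1,1,1,0,0,1,1]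
/-- `c`-offsets of the 16 slots of a 3D cell. -/
def offC : Fin 16 → ℕ := ![0,0,0,0,0,0,1,1,0,0,1,1,1,1,1,1]

/-- The node of the 3D cell `□^j_{a,b,c}` occupied by slot `s`. -/
def cellNode3 (j a b c : ℕ) (s : Fin 16) : ℕ × ℕ × ℕ × ℕ :=
  (j + s.val % 2, a + offA s, b + offB s, c + offC s)

/-- First jet of the discrete field on the 3D cell `□^j_{a,b,c}`. -/
def jet3 (φ : ℕ → ℕ → ℕ → ℕ → E3) (j a b c : ℕ) : Fin 16 → E3 :=
  fun s => φ (j + s.val % 2) (a + offA s) (b + offB s) (c + offC s)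

/-- Sum of `D_pL(j¹φ(□))` over all pairs `(□, p)` such that the given node is incident
to the 3D cell `□` in slot `p`. -/
noncomputable def delSum3 (N A B C : ℕ) (L : (Fin 16 → E3) → ℝ)
    (φ : ℕ → ℕ → ℕ → ℕ → E3) (nd : ℕ × ℕ × ℕ × ℕ) : E3 :=
  ∑ j' ∈ Finset.range N, ∑ a' ∈ Finset.range A, ∑ b' ∈ Finset.range B,
    ∑ c' ∈ Finset.range C, ∑ s : Fin 16,
      if cellNode3 j' a' b' c' s = nd then pgrad3 L (jet3 φ j' a' b' c') s else 0

/-- The even paper slots `2, 4, …, 16` (odd slots `1, 3, …, 15` here). -/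
def evenSlot (m : Fin 8) : Fin 16 := ⟨2 * m.val + 1, by omega⟩

/-- The odd paper slots `1, 3, …, 15` (even slots `0, 2, …, 14` here), carrying the
time-`j` values. -/
def oddSlot (m : Fin 8) : Fin 16 := ⟨2 * m.val, by omega⟩

/-- Total discrete linear momentum at time level `j` (3D). -/
noncomputable def Jlin3 (A B C : ℕ) (L : (Fin 16 → E3) → ℝ)
    (φ : ℕ → ℕ → ℕ → ℕ → E3) (j : ℕ) : E3 :=
  ∑ a ∈ Finset.range A, ∑ b ∈ Finset.range B, ∑ c ∈ Finset.range C,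
    ∑ m : Fin 8, pgrad3 L (jet3 φ j a b c) (evenSlot m)

/-- Total discrete angular momentum at time level `j` (3D). -/
noncomputable def Jang3 (A B C : ℕ) (L : (Fin 16 → E3) → ℝ)
    (φ : ℕ → ℕ → ℕ → ℕ → E3) (j : ℕ) : E3 :=
  ∑ a ∈ Finset.range A, ∑ b ∈ Finset.range B, ∑ c ∈ Finset.range C,
    ∑ m : Fin 8,
      cross3 (jet3 φ j a b c (evenSlot m)) (pgrad3 L (jet3 φ j a b c) (evenSlot m))

/-!
Both laws come from cellwise Noether identities. Differentiating the SE(3)-invariance of `L₀`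
along the translations by `c` and along the rotations `exp (t • K)` about `g` (`K v = g × v`)
gives, on every cell, `∑ₚ ⟪D_pL, c⟫ = 0` for `c ⟂ g` and `∑ₚ ⟪D_pL, g × x_p⟫ = 0`; the potential
term contributes nothing, since it only sees `⟪g, ·⟫` of the slots. Summing the Euler–Lagrange
equations of time level `j + 1`, paired with `c` resp. `g × φ`, over all spatial nodes counts
every slot at time `j + 1` exactly once: the upper slots of the cells at level `j`, which give the
momentum at `j`, and the lower slots of the cells at level `j + 1`, which by the cell identity
give minus the momentum at `j + 1`.
-/

open Finset
open scoped Matrix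

theorem fderiv_apply_eq_zero_of_comp_const {F G : Type*} [NormedAddCommGroup F]
    [NormedSpace ℝ F] [NormedAddCommGroup G] [NormedSpace ℝ G] {f : F → G} {γ : ℝ → F}
    {x v : F} (hf : DifferentiableAt ℝ f x) (hγ : HasDerivAt γ v 0) (hγ0 : γ 0 = x)
    (hconst : ∀ t, f (γ t) = f x) : fderiv ℝ f x v = 0 := by
  subst hγ0
  have h := hf.hasFDerivAt.comp_hasDerivAt 0 hγ
  rw [show f ∘ γ = fun _ => f (γ 0) from funext hconst] at h
  exact h.unique (hasDerivAt_const 0 _)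

theorem fderiv_apply_const_eq_zero_of_forall_add_const {ι E G : Type*} [Fintype ι]
    [NormedAddCommGroup E] [NormedSpace ℝ E] [NormedAddCommGroup G] [NormedSpace ℝ G]
    {f : (ι → E) → G} {x : ι → E} (hf : DifferentiableAt ℝ f x)
    (h : ∀ c : E, f (fun p => x p + c) = f x) (c : E) :
    fderiv ℝ f x (fun _ => c) = 0 := by
  refine fderiv_apply_eq_zero_of_comp_const hf ?_ (by simp) fun t => h (t • c)
  have hγ := ((hasDerivAt_id (0 : ℝ)).smul_const (fun _ : ι => c)).const_add x
  rwa [one_smul] at hγ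

open NormedSpace in
attribute [local instance] Matrix.linftyOpNormedRing Matrix.linftyOpNormedAlgebra in
theorem exp_smul_mem_specialOrthogonalGroup {m : Type*} [Fintype m] [DecidableEq m]
    {K : Matrix m m ℝ} (hK : Kᵀ = -K) (t : ℝ) :
    exp (t • K) ∈ Matrix.specialOrthogonalGroup m ℝ := by
  have horth : exp (t • K) ∈ Matrix.orthogonalGroup m ℝ := by
    rw [Matrix.mem_orthogonalGroup_iff, ← Matrix.exp_transpose, Matrix.transpose_smul, hK,
      smul_neg, ← Matrix.exp_add_of_commute _ _ (Commute.refl (t • K)).neg_right, add_neg_cancel,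
      exp_zero]
  refine (Matrix.mem_specialOrthogonalGroup_iff).2 ⟨horth, ?_⟩
  -- `exp (t • K)` is a square, so its determinant `±1` is `1`.
  have hsq : (exp (t • K)).det = (exp ((t / 2) • K)).det ^ 2 := by
    rw [sq, ← Matrix.det_mul, ← Matrix.exp_add_of_commute _ _ (Commute.refl _), ← add_smul,
      add_halves]
  have hdet : (exp (t • K)).det * (exp (t • K)).det = 1 := by
    simpa [Matrix.det_mul] using congrArg Matrix.det ((Matrix.mem_orthogonalGroup_iff _ _).1 horth)
  nlinarith [sq_nonneg ((exp ((t / 2) • K)).det)]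

open NormedSpace in
attribute [local instance] Matrix.linftyOpNormedRing Matrix.linftyOpNormedAlgebra in
theorem fderiv_apply_skew_eq_zero_of_forall_rotate {ι m G : Type*} [Fintype ι] [Fintype m]
    [DecidableEq m] [NormedAddCommGroup G] [NormedSpace ℝ G]
    {f : (ι → EuclideanSpace ℝ m) → G} {x : ι → EuclideanSpace ℝ m}
    (hf : DifferentiableAt ℝ f x)
    (h : ∀ R ∈ Matrix.specialOrthogonalGroup m ℝ,
      f (fun p => Matrix.toEuclideanLin R (x p)) = f x)
    {K : Matrix m m ℝ} (hK : Kᵀ = -K) :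
    fderiv ℝ f x (fun p => Matrix.toEuclideanLin K (x p)) = 0 := by
  let ℓ : Matrix m m ℝ →ₗ[ℝ] ι → EuclideanSpace ℝ m :=
    LinearMap.pi fun p => LinearMap.applyₗ (x p) ∘ₗ Matrix.toEuclideanLin.toLinearMap
  have hγ := ℓ.toContinuousLinearMap.hasFDerivAt.comp_hasDerivAt 0
    (hasDerivAt_exp_smul_const (𝕂 := ℝ) K 0)
  rw [zero_smul, exp_zero, one_mul] at hγ
  refine fderiv_apply_eq_zero_of_comp_const hf hγ ?_ fun t => h _ ?_
  · ext p : 1; simp [ℓ]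
  · exact exp_smul_mem_specialOrthogonalGroup hK t

theorem inner_pgrad3_eq_fderiv {k : ℕ} {L : (Fin k → E3) → ℝ} {x : Fin k → E3}
    (hL : DifferentiableAt ℝ L x) (p : Fin k) (v : E3) :
    ⟪pgrad3 L x p, v⟫ = fderiv ℝ L x (Pi.single p v) := by
  have h : HasFDerivAt (fun y => L (Function.update x p y))
      ((fderiv ℝ L x).comp (.pi (Pi.single p (.id ℝ E3)))) (x p) := by
    refine HasFDerivAt.comp (x p) ?_ (hasFDerivAt_update x (x p))
    rw [Function.update_eq_self]
    exact hL.hasFDerivAt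
  rw [pgrad3, h.hasGradientAt.gradient, InnerProductSpace.toDual_symm_apply]
  simp only [ContinuousLinearMap.comp_apply]
  congr 1
  ext q : 1
  rcases eq_or_ne q p with rfl | hq <;> simp [*]

theorem sum_inner_pgrad3_eq_fderiv {k : ℕ} {L : (Fin k → E3) → ℝ} {x : Fin k → E3}
    (hL : DifferentiableAt ℝ L x) (w : Fin k → E3) :
    ∑ s, ⟪pgrad3 L x s, w s⟫ = fderiv ℝ L x w := by
  simp_rw [inner_pgrad3_eq_fderiv hL, ← map_sum, Finset.univ_sum_single]

def crossMatrix (u : E3) : Matrix (Fin 3) (Fin 3) ℝ :=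
  !![0, -u 2, u 1; u 2, 0, -u 0; -u 1, u 0, 0]

theorem crossMatrix_transpose (u : E3) : (crossMatrix u)ᵀ = -crossMatrix u := by
  ext i j
  fin_cases i <;> fin_cases j <;> simp [crossMatrix]

theorem toEuclideanLin_crossMatrix (u v : E3) :
    Matrix.toEuclideanLin (crossMatrix u) v = cross3 u v := by
  ext i
  fin_cases i <;> simp [crossMatrix, cross3, Matrix.toLpLin_apply,
    dotProduct, Fin.sum_univ_three] <;> ring

theorem inner_cross3_self (u v : E3) : ⟪u, cross3 u v⟫ = 0 := by
  simp [cross3, PiLp.inner_apply, Fin.sum_univ_three]; ring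

theorem inner_cross3_cyclic (u v w : E3) : ⟪u, cross3 v w⟫ = ⟪w, cross3 u v⟫ := by
  simp [cross3, PiLp.inner_apply, Fin.sum_univ_three]; ring

def gravityPotential (κ : ℝ) (g : E3) : (Fin 16 → E3) →L[ℝ] ℝ :=
  -κ • ∑ m : Fin 8, (innerSL ℝ g).comp (ContinuousLinearMap.proj (oddSlot m))

theorem gravityPotential_apply (κ : ℝ) (g : E3) (x : Fin 16 → E3) :
    gravityPotential κ g x = -κ * ∑ m : Fin 8, ⟪g, x (oddSlot m)⟫ := by
  simp [gravityPotential]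

section Noether

variable {L L₀ : (Fin 16 → E3) → ℝ} {κ : ℝ} {g : E3}

theorem hasFDerivAt_of_eq_add_gravityPotential {x : Fin 16 → E3} (hL₀ : DifferentiableAt ℝ L₀ x)
    (hLdef : ∀ x : Fin 16 → E3, L x = L₀ x + (-κ * ∑ m : Fin 8, ⟪g, x (oddSlot m)⟫)) :
    HasFDerivAt L (fderiv ℝ L₀ x + gravityPotential κ g) x := by
  have hL : L = fun y => L₀ y + gravityPotential κ g y :=
    funext fun y => by rw [hLdef, gravityPotential_apply]
  exact hL ▸ hL₀.hasFDerivAt.add (gravityPotential κ g).hasFDerivAt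

variable (hL₀ : Differentiable ℝ L₀)
    (hinv : ∀ (R : Matrix.specialOrthogonalGroup (Fin 3) ℝ) (cc : E3) (x : Fin 16 → E3),
      L₀ (fun p => Matrix.toEuclideanLin (R : Matrix (Fin 3) (Fin 3) ℝ) (x p) + cc) = L₀ x)
    (hLdef : ∀ x : Fin 16 → E3, L x = L₀ x + (-κ * ∑ m : Fin 8, ⟪g, x (oddSlot m)⟫))
include hL₀ hinv hLdef

theorem sum_inner_pgrad3_eq_zero_of_inner_eq_zero (x : Fin 16 → E3) {c : E3}
    (hc : ⟪g, c⟫ = 0) : ∑ s, ⟪pgrad3 L x s, c⟫ = 0 := by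
  have hL := hasFDerivAt_of_eq_add_gravityPotential (hL₀ x) hLdef
  have htrans : fderiv ℝ L₀ x (fun _ => c) = 0 :=
    fderiv_apply_const_eq_zero_of_forall_add_const (hL₀ x)
      (fun c => by simpa using hinv 1 c x) c
  rw [sum_inner_pgrad3_eq_fderiv hL.differentiableAt (fun _ => c), hL.fderiv]
  simp [htrans, gravityPotential_apply, hc]

theorem sum_inner_pgrad3_cross3_eq_zero (x : Fin 16 → E3) :
    ∑ s, ⟪pgrad3 L x s, cross3 g (x s)⟫ = 0 := by
  have hL := hasFDerivAt_of_eq_add_gravityPotential (hL₀ x) hLdef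
  have hrot := fderiv_apply_skew_eq_zero_of_forall_rotate (hL₀ x)
      (fun R hR => by simpa using hinv ⟨R, hR⟩ 0 x) (crossMatrix_transpose g)
  simp_rw [toEuclideanLin_crossMatrix] at hrot
  rw [sum_inner_pgrad3_eq_fderiv hL.differentiableAt (fun s => cross3 g (x s)), hL.fderiv]
  simp [hrot, gravityPotential_apply, inner_cross3_self]

end Noether

section Incidence

variable {M : Type*} [AddCommMonoid M]

theorem sum_fin16_eq_oddSlot_add_evenSlot (f : Fin 16 → M) :
    ∑ s, f s = ∑ m, f (oddSlot m) + ∑ m, f (evenSlot m) := by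
  rw [← sum_add_distrib, ← (finProdFinEquiv (m := 8) (n := 2)).sum_comp, Fintype.sum_prod_type]
  refine sum_congr rfl fun m _ => ?_
  rw [Fin.sum_univ_two]
  congr 2 <;> ext <;> simp [finProdFinEquiv, oddSlot, evenSlot, add_comm, mul_comm]

def incidenceSum3 (N A B C : ℕ) (F : ℕ → ℕ → ℕ → ℕ → Fin 16 → M)
    (nd : ℕ × ℕ × ℕ × ℕ) : M :=
  ∑ j' ∈ range N, ∑ a' ∈ range A, ∑ b' ∈ range B, ∑ c' ∈ range C, ∑ s : Fin 16,
    if cellNode3 j' a' b' c' s = nd then F j' a' b' c' s else 0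

def cellSlotSum (A B C : ℕ) (F : ℕ → ℕ → ℕ → ℕ → Fin 16 → M) (j : ℕ)
    (S : Fin 8 → Fin 16) : M :=
  ∑ a ∈ range A, ∑ b ∈ range B, ∑ c ∈ range C, ∑ m, F j a b c (S m)

theorem sum_nodes_ite_cellNode3_eq {A B C j' a' b' c' t : ℕ} (ha : a' < A) (hb : b' < B)
    (hc : c' < C) (s : Fin 16) (v : M) :
    ∑ a ∈ range (A + 1), ∑ b ∈ range (B + 1), ∑ c ∈ range (C + 1),
      (if cellNode3 j' a' b' c' s = (t, a, b, c) then v else 0)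
      = if j' + s.val % 2 = t then v else 0 := by
  have hoff : offA s ≤ 1 ∧ offB s ≤ 1 ∧ offC s ≤ 1 := by fin_cases s <;> decide
  have ha' : a' + offA s < A + 1 := by omega
  have hb' : b' + offB s < B + 1 := by omega
  have hc' : c' + offC s < C + 1 := by omega
  simp only [cellNode3, Prod.mk.injEq, ite_and]
  by_cases ht : j' + s.val % 2 = t <;> simp [ht, ha', hb', hc']

theorem sum_slots_sum_range_ite_eq {N j : ℕ} (hj : j + 2 ≤ N) (f : ℕ → Fin 16 → M) :
    ∑ s : Fin 16, ∑ j' ∈ range N, (if j' + s.val % 2 = j + 1 then f j' s else 0)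
      = ∑ m, f j (evenSlot m) + ∑ m, f (j + 1) (oddSlot m) := by
  rw [sum_fin16_eq_oddSlot_add_evenSlot, add_comm]
  congr 1 <;> refine sum_congr rfl fun m _ => ?_ <;> simp [oddSlot, evenSlot] <;> omega

theorem sum_incidenceSum3_eq {N A B C j : ℕ} (hj : j + 2 ≤ N)
    (F : ℕ → ℕ → ℕ → ℕ → Fin 16 → M) :
    ∑ a ∈ range (A + 1), ∑ b ∈ range (B + 1), ∑ c ∈ range (C + 1),
      incidenceSum3 N A B C F (j + 1, a, b, c)
      = cellSlotSum A B C F j evenSlot + cellSlotSum A B C F (j + 1) oddSlot := by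
  calc _ = ∑ j' ∈ range N, ∑ a' ∈ range A, ∑ b' ∈ range B, ∑ c' ∈ range C, ∑ s : Fin 16,
          (if j' + s.val % 2 = j + 1 then F j' a' b' c' s else 0) := by
        unfold incidenceSum3
        simp_rw [sum_comm (s := range (A + 1)), sum_comm (s := range (B + 1)),
          sum_comm (s := range (C + 1))]
        refine sum_congr rfl fun j' _ => sum_congr rfl fun a' ha => sum_congr rfl fun b' hb =>
          sum_congr rfl fun c' hc => sum_congr rfl fun s _ => ?_
        rw [mem_range] at ha hb hc
        exact sum_nodes_ite_cellNode3_eq ha hb hc s _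
    _ = ∑ a' ∈ range A, ∑ b' ∈ range B, ∑ c' ∈ range C, ∑ s : Fin 16, ∑ j' ∈ range N,
          (if j' + s.val % 2 = j + 1 then F j' a' b' c' s else 0) := by
        simp_rw [sum_comm (s := range N)]
    _ = _ := by
        simp only [cellSlotSum, sum_slots_sum_range_ite_eq hj, sum_add_distrib]

end Incidence

theorem cellSlotSum_evenSlot_succ_eq {M : Type*} [AddCommGroup M] {N A B C j : ℕ}
    (hj : j + 2 ≤ N) {F : ℕ → ℕ → ℕ → ℕ → Fin 16 → M}
    (hnode : ∀ a ≤ A, ∀ b ≤ B, ∀ c ≤ C, incidenceSum3 N A B C F (j + 1, a, b, c) = 0)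
    (hcell : ∀ a b c, ∑ s, F (j + 1) a b c s = 0) :
    cellSlotSum A B C F (j + 1) evenSlot = cellSlotSum A B C F j evenSlot := by
  have hnodes := sum_incidenceSum3_eq (A := A) (B := B) (C := C) hj F
  rw [sum_eq_zero fun a ha => sum_eq_zero fun b hb => sum_eq_zero fun c hc =>
    hnode a (Nat.lt_add_one_iff.1 (mem_range.1 ha)) b (Nat.lt_add_one_iff.1 (mem_range.1 hb)) c
      (Nat.lt_add_one_iff.1 (mem_range.1 hc))] at hnodes
  have hcells :
      cellSlotSum A B C F (j + 1) oddSlot + cellSlotSum A B C F (j + 1) evenSlot = 0 := by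
    simp only [cellSlotSum, ← sum_add_distrib]
    refine sum_eq_zero fun a _ => sum_eq_zero fun b _ => sum_eq_zero fun c _ => ?_
    rw [sum_add_distrib, ← sum_fin16_eq_oddSlot_add_evenSlot, hcell]
  rw [add_comm] at hcells
  exact add_right_cancel (hcells.trans hnodes)

theorem inner_Jlin3_eq_cellSlotSum (A B C : ℕ) (L : (Fin 16 → E3) → ℝ)
    (φ : ℕ → ℕ → ℕ → ℕ → E3) (j : ℕ) (v : E3) :
    ⟪Jlin3 A B C L φ j, v⟫
      = cellSlotSum A B C (fun j a b c s => ⟪pgrad3 L (jet3 φ j a b c) s, v⟫) j evenSlot := by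
  simp only [Jlin3, cellSlotSum, sum_inner]

theorem inner_delSum3_eq_incidenceSum3 (N A B C : ℕ) (L : (Fin 16 → E3) → ℝ)
    (φ : ℕ → ℕ → ℕ → ℕ → E3) (nd : ℕ × ℕ × ℕ × ℕ) (v : E3) :
    ⟪delSum3 N A B C L φ nd, v⟫
      = incidenceSum3 N A B C (fun j a b c s => ⟪pgrad3 L (jet3 φ j a b c) s, v⟫) nd := by
  simp only [delSum3, incidenceSum3, sum_inner, apply_ite (⟪·, v⟫), inner_zero_left]

theorem inner_Jang3_eq_cellSlotSum (A B C : ℕ) (L : (Fin 16 → E3) → ℝ)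
    (φ : ℕ → ℕ → ℕ → ℕ → E3) (j : ℕ) (g : E3) :
    ⟪g, Jang3 A B C L φ j⟫ = cellSlotSum A B C
      (fun j a b c s => ⟪pgrad3 L (jet3 φ j a b c) s, cross3 g (jet3 φ j a b c s)⟫) j evenSlot := by
  simp only [Jang3, cellSlotSum, inner_sum, inner_cross3_cyclic g]

theorem inner_delSum3_cross3_eq_incidenceSum3 (N A B C : ℕ) (L : (Fin 16 → E3) → ℝ)
    (φ : ℕ → ℕ → ℕ → ℕ → E3) (t a b c : ℕ) (g : E3) :
    ⟪delSum3 N A B C L φ (t, a, b, c), cross3 g (φ t a b c)⟫ = incidenceSum3 N A B C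
      (fun j a b c s => ⟪pgrad3 L (jet3 φ j a b c) s, cross3 g (jet3 φ j a b c s)⟫)
      (t, a, b, c) := by
  simp only [delSum3, incidenceSum3, sum_inner]
  refine sum_congr rfl fun j' _ => sum_congr rfl fun a' _ => sum_congr rfl fun b' _ =>
    sum_congr rfl fun c' _ => sum_congr rfl fun s _ => ?_
  split_ifs with h
  · simp only [cellNode3, Prod.mk.injEq] at h
    simp only [jet3, h]
  · exact inner_zero_left _

theorem discrete_noether_gravity_residual_3D_general
    (N A B C : ℕ)
    (L L₀ : (Fin 16 → E3) → ℝ) (hL₀ : Differentiable ℝ L₀)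
    (κ : ℝ) (g : E3)
    (hinv : ∀ (R : Matrix.specialOrthogonalGroup (Fin 3) ℝ) (cc : E3) (x : Fin 16 → E3),
      L₀ (fun p => Matrix.toEuclideanLin (R : Matrix (Fin 3) (Fin 3) ℝ) (x p) + cc)
        = L₀ x)
    (hLdef : ∀ x : Fin 16 → E3, L x = L₀ x + (-κ * ∑ m : Fin 8, ⟪g, x (oddSlot m)⟫))
    (φ : ℕ → ℕ → ℕ → ℕ → E3)
    (hDEL : ∀ j a b c : ℕ, 0 < j → j < N → a ≤ A → b ≤ B → c ≤ C →
      delSum3 N A B C L φ (j, a, b, c) = 0) :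
    ∀ j : ℕ, j + 2 ≤ N →
      (∀ cc : E3, ⟪g, cc⟫ = 0 →
        ⟪Jlin3 A B C L φ (j + 1) - Jlin3 A B C L φ j, cc⟫ = 0)
        ∧ ⟪g, Jang3 A B C L φ (j + 1) - Jang3 A B C L φ j⟫ = 0 := by
  intro j hj
  have hDEL' : ∀ a ≤ A, ∀ b ≤ B, ∀ c ≤ C, delSum3 N A B C L φ (j + 1, a, b, c) = 0 :=
    fun a ha b hb c hc => hDEL (j + 1) a b c j.succ_pos (by omega) ha hb hc
  constructor
  · intro cc hgc
    rw [inner_sub_left, sub_eq_zero, inner_Jlin3_eq_cellSlotSum, inner_Jlin3_eq_cellSlotSum]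
    refine cellSlotSum_evenSlot_succ_eq hj (fun a ha b hb c hc => ?_) fun a b c =>
      sum_inner_pgrad3_eq_zero_of_inner_eq_zero hL₀ hinv hLdef _ hgc
    rw [← inner_delSum3_eq_incidenceSum3, hDEL' a ha b hb c hc, inner_zero_left]
  · rw [inner_sub_right, sub_eq_zero, inner_Jang3_eq_cellSlotSum, inner_Jang3_eq_cellSlotSum]
    refine cellSlotSum_evenSlot_succ_eq hj (fun a ha b hb c hc => ?_) fun a b c =>
      sum_inner_pgrad3_cross3_eq_zero hL₀ hinv hLdef _
    rw [← inner_delSum3_cross3_eq_incidenceSum3, hDEL' a ha b hb c hc, inner_zero_left]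

/-- **Residual Noether symmetries in the presence of gravity (3D)**: if the cell
Lagrangian is `L = L₀ + Π` with `L₀` invariant under SE(3) acting simultaneously on all
slots and `Π(x) = −κ Σ_{p odd} g·x_p` a gravitational potential term, and `φ` satisfies
the 3D discrete Euler–Lagrange node equations at every node with `0 < j < N`, then
(i) the components of the discrete linear momentum orthogonal to `g` are conserved, and
(ii) the discrete angular momentum about the axis `g` is conserved. -/
theorem discrete_noether_gravity_residual_3D
    (N A B C : ℕ) (hN : 1 ≤ N) (hA : 1 ≤ A) (hB : 1 ≤ B) (hC : 1 ≤ C)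
    (L L₀ : (Fin 16 → E3) → ℝ) (hL₀ : Differentiable ℝ L₀)
    (κ : ℝ) (g : E3)
    (hinv : ∀ (R : Matrix.specialOrthogonalGroup (Fin 3) ℝ) (cc : E3) (x : Fin 16 → E3),
      L₀ (fun p => Matrix.toEuclideanLin (R : Matrix (Fin 3) (Fin 3) ℝ) (x p) + cc)
        = L₀ x)
    (hLdef : ∀ x : Fin 16 → E3, L x = L₀ x + (-κ * ∑ m : Fin 8, ⟪g, x (oddSlot m)⟫))
    (φ : ℕ → ℕ → ℕ → ℕ → E3)
    (hDEL : ∀ j a b c : ℕ, 0 < j → j < N → a ≤ A → b ≤ B → c ≤ C →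
      delSum3 N A B C L φ (j, a, b, c) = 0) :
    ∀ j : ℕ, j + 2 ≤ N →
      (∀ cc : E3, ⟪g, cc⟫ = 0 →
        ⟪Jlin3 A B C L φ (j + 1) - Jlin3 A B C L φ j, cc⟫ = 0)
        ∧ ⟪g, Jang3 A B C L φ (j + 1) - Jang3 A B C L φ j⟫ = 0 :=
  discrete_noether_gravity_residual_3D_general N A B C L L₀ hL₀ κ g hinv hLdef φ hDEL

end
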